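/- No nontrivial J-projective class for normal MPDO tensors: suppose V is a unitary matrix of the block-commuting form above, i.e., Ṽ = W⁻¹VW* commutes with diag(1, Λ₂, Λ₃, …) where all Jordan blocks Λ_{i>1} have eigenvalues of modulus < 1, and V satisfies VV* = ε·Id with ε = ±1. Then ε = +1. -/
import Mathlib

open Matrix

/-- No nontrivial `J`-projective class for normal MPDO tensors.
Let `V` be a unitary matrix on the bond space, `W` invertible, and suppose
`Ṽ = W⁻¹ * V * W̄` (with `W̄` the entrywise conjugate) commutes with the block
matrix `diag(1, Λ)` where all eigenvalues of `Λ` have modulus `< 1`.  If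
`V V̄ = ε • Id` with `ε = ±1`, then `ε = +1`. -/
theorem no_nontrivial_J_projective_class {m : ℕ}
    (Λ : Matrix (Fin m) (Fin m) ℂ) (hΛ : ∀ μ ∈ spectrum ℂ Λ, ‖μ‖ < 1)
    (V W : Matrix (Unit ⊕ Fin m) (Unit ⊕ Fin m) ℂ)
    (hV : V ∈ Matrix.unitaryGroup (Unit ⊕ Fin m) ℂ)
    (hW : IsUnit W)
    (hcomm : (W⁻¹ * V * W.map star) * Matrix.fromBlocks (1 : Matrix Unit Unit ℂ) 0 0 Λ
        = Matrix.fromBlocks (1 : Matrix Unit Unit ℂ) 0 0 Λ * (W⁻¹ * V * W.map star))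
    (ε : ℂ) (hε : ε = 1 ∨ ε = -1)
    (hVV : V * V.map star = ε • (1 : Matrix (Unit ⊕ Fin m) (Unit ⊕ Fin m) ℂ)) :
    ε = 1 := by
  rcases hε with h | h
  · exact h
  exfalso
  set c := starRingEnd ℂ with hc
  have hmaps : ∀ {n : Type} (X : Matrix n n ℂ), X.map star = X.map c := fun X => rfl
  set a := W⁻¹ * V * W.map star with ha
  have hdetW : IsUnit W.det := (Matrix.isUnit_iff_isUnit_det W).mp hW
  -- compute a * a.map c = ε • 1
  have hWc : W.map c * (W⁻¹).map c = 1 := by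
    rw [← Matrix.map_mul, Matrix.mul_nonsing_inv _ hdetW,
      Matrix.map_one c (map_zero c) (map_one c)]
  have hmapa : a.map c = (W⁻¹).map c * (V.map c * W) := by
    rw [ha, hmaps, Matrix.map_mul, Matrix.map_mul, Matrix.map_map, Matrix.mul_assoc]
    congr 1
    congr 1
    ext i j
    simp [hc, Matrix.map_apply]
  have hVV' : V * V.map c = ε • 1 := hVV
  have haa : a * a.map c = ε • 1 := by
    rw [hmapa, ha, hmaps]
    simp only [Matrix.mul_assoc]
    rw [← Matrix.mul_assoc (W.map c) ((W⁻¹).map c), hWc, Matrix.one_mul,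
      ← Matrix.mul_assoc V (V.map c) W, hVV', Matrix.smul_mul, Matrix.one_mul,
      Matrix.mul_smul, Matrix.nonsing_inv_mul _ hdetW]
  -- block structure: toBlocks₁₂ a = 0
  have hdecomp : a = Matrix.fromBlocks a.toBlocks₁₁ a.toBlocks₁₂ a.toBlocks₂₁ a.toBlocks₂₂ :=
    (Matrix.fromBlocks_toBlocks a).symm
  rw [hdecomp, Matrix.fromBlocks_multiply, Matrix.fromBlocks_multiply] at hcomm
  have hB : a.toBlocks₁₂ * Λ = a.toBlocks₁₂ := by
    have h12 := congrArg Matrix.toBlocks₁₂ hcomm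
    simpa using h12
  have h1spec : (1 : ℂ) ∉ spectrum ℂ Λ := by
    intro hmem
    have := hΛ 1 hmem
    simp at this
  have hU : IsUnit ((1 : Matrix (Fin m) (Fin m) ℂ) - Λ) := by
    rw [spectrum.notMem_iff] at h1spec
    simpa using h1spec
  have hU' : IsUnit (Λ - 1) := by
    have := hU.neg
    simpa using this
  have hdet : IsUnit (Λ - 1).det := (Matrix.isUnit_iff_isUnit_det _).mp hU'
  have h0 : a.toBlocks₁₂ * (Λ - 1) = 0 := by
    rw [Matrix.mul_sub, hB, Matrix.mul_one, sub_self]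
  have hB0 : a.toBlocks₁₂ = 0 := by
    have h := congrArg (· * (Λ - 1)⁻¹) h0
    simpa [Matrix.mul_assoc, Matrix.mul_nonsing_inv _ hdet] using h
  have hzero : ∀ j, a (Sum.inl ()) (Sum.inr j) = 0 := by
    intro j
    have := congrFun (congrFun hB0 ()) j
    simpa [Matrix.toBlocks₁₂] using this
  -- entry (inl, inl)
  have hz : a (Sum.inl ()) (Sum.inl ()) * c (a (Sum.inl ()) (Sum.inl ())) = ε := by
    have h := congrFun (congrFun haa (Sum.inl ())) (Sum.inl ())
    rw [Matrix.mul_apply, Fintype.sum_sum_type] at h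
    simpa [Matrix.map_apply, Matrix.one_apply, hzero] using h
  rw [h] at hz
  have hns : (Complex.normSq (a (Sum.inl ()) (Sum.inl ())) : ℂ) = -1 := by
    rw [← Complex.mul_conj]
    exact hz
  have hns' : Complex.normSq (a (Sum.inl ()) (Sum.inl ())) = -1 := by
    exact_mod_cast hns
  have := Complex.normSq_nonneg (a (Sum.inl ()) (Sum.inl ()))
  linarith
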